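/- For the r-th order Schrödinger-like operator L_r = d^r/dx^r + u, the terms of L_r^k f of degree ≤ 1 in u are: L_r^k f = f^{(rk)} + Σ_{m_0+m_1 = r(k-1)} (Σ_{i=0}^{k-1} C(r·i, m_1))·u^{(m_1)}·f^{(m_0)} + (terms of degree ≥ 2 in u). -/

import Mathlib

open Finset
open scoped ContDiff

set_option linter.unusedVariables false

private lemma itd_smooth {n : ℕ} {f : ℝ → ℝ} (hf : ContDiff ℝ ∞ f) :
    ContDiff ℝ ∞ (iteratedDeriv n f) := by
  rw [iteratedDeriv_eq_iterate]; exact ContDiff.iterate_deriv n hf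

private lemma itd_fin {n : ℕ} {f : ℝ → ℝ} (hf : ContDiff ℝ ∞ f) :
    ContDiff ℝ (n : ℕ∞) f := hf.of_le (by exact_mod_cast le_top)

private lemma itd_zero (n : ℕ) (x : ℝ) : iteratedDeriv n (fun _ : ℝ => (0:ℝ)) x = 0 := by
  induction n with
  | zero => simp
  | succ n ih => rw [iteratedDeriv_succ']; simp only [deriv_const']; exact ih

private lemma itd_add {n : ℕ} {f g : ℝ → ℝ} (hf : ContDiff ℝ ∞ f) (hg : ContDiff ℝ ∞ g) (x : ℝ) :
    iteratedDeriv n (fun y => f y + g y) x = iteratedDeriv n f x + iteratedDeriv n g x := by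
  rw [← iteratedDerivWithin_univ, ← iteratedDerivWithin_univ, ← iteratedDerivWithin_univ]
  exact iteratedDerivWithin_add (Set.mem_univ x) uniqueDiffOn_univ
    (hf.of_le (by exact_mod_cast le_top)).contDiffWithinAt
    (hg.of_le (by exact_mod_cast le_top)).contDiffWithinAt

private lemma itd_const_mul {n : ℕ} (a : ℝ) {g : ℝ → ℝ} (hg : ContDiff ℝ ∞ g) (x : ℝ) :
    iteratedDeriv n (fun y => a * g y) x = a * iteratedDeriv n g x := by
  rw [← iteratedDerivWithin_univ, ← iteratedDerivWithin_univ]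
  exact iteratedDerivWithin_const_mul (Set.mem_univ x) uniqueDiffOn_univ a (hg.of_le (by exact_mod_cast le_top)).contDiffWithinAt

private lemma itd_comp (m n : ℕ) (f : ℝ → ℝ) :
    iteratedDeriv m (iteratedDeriv n f) = iteratedDeriv (m + n) f := by
  induction m with
  | zero => simp
  | succ m ih =>
      rw [iteratedDeriv_succ, ih, show m + 1 + n = (m + n) + 1 by omega, iteratedDeriv_succ]

private lemma itd_sum {n : ℕ} {ι : Type*} (s : Finset ι) (g : ι → ℝ → ℝ)
    (hg : ∀ i ∈ s, ContDiff ℝ ∞ (g i)) (x : ℝ) :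
    iteratedDeriv n (fun y => ∑ i ∈ s, g i y) x = ∑ i ∈ s, iteratedDeriv n (g i) x := by
  induction s using Finset.cons_induction with
  | empty => simpa using itd_zero n x
  | cons a s ha ih =>
      simp only [Finset.sum_cons]
      rw [itd_add (hg a (Finset.mem_cons_self a s))
        (ContDiff.sum fun i hi => hg i (Finset.mem_cons_of_mem hi)) x,
        ih fun i hi => hg i (Finset.mem_cons_of_mem hi)]

private lemma hasDerivAt_itd {m : ℕ} {u : ℝ → ℝ} (hu : ContDiff ℝ ∞ u) (x : ℝ) :
    HasDerivAt (iteratedDeriv m u) (iteratedDeriv (m+1) u x) x := by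
  rw [iteratedDeriv_succ]
  exact (((itd_smooth hu).differentiable (by simp)).differentiableAt).hasDerivAt

private lemma pascal_sum (n : ℕ) (a : ℕ → ℝ) :
    ∑ m ∈ Finset.range (n+2), ((n+1).choose m : ℝ) * a m
      = ∑ m ∈ Finset.range (n+1), (n.choose m : ℝ) * a (m+1)
        + ∑ m ∈ Finset.range (n+1), (n.choose m : ℝ) * a m := by
  have h1 := Finset.sum_range_succ' (fun m => ((n+1).choose m : ℝ) * a m) (n+1)
  have h2 := Finset.sum_range_succ' (fun m => (n.choose m : ℝ) * a m) (n+1)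
  have h3 := Finset.sum_range_succ (fun m => (n.choose m : ℝ) * a m) (n+1)
  simp only [Nat.choose_succ_succ, Nat.choose_zero_right, Nat.cast_add, Nat.cast_one,
    add_mul, one_mul, Nat.choose_succ_self, Nat.cast_zero, zero_mul, add_zero] at h1 h2 h3
  rw [h1, Finset.sum_add_distrib]
  linarith [h2, h3]

private lemma itd_leibniz (n : ℕ) {u f : ℝ → ℝ} (hu : ContDiff ℝ ∞ u) (hf : ContDiff ℝ ∞ f)
    (x : ℝ) :
    iteratedDeriv n (fun y => u y * f y) x
      = ∑ m ∈ range (n+1), (n.choose m : ℝ) * iteratedDeriv m u x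
          * iteratedDeriv (n-m) f x := by
  induction n generalizing x with
  | zero => simp
  | succ n ih =>
    have hfun : iteratedDeriv n (fun y => u y * f y)
        = fun y => ∑ m ∈ range (n+1), (n.choose m : ℝ) * iteratedDeriv m u y
            * iteratedDeriv (n-m) f y := funext ih
    have hD : HasDerivAt (fun y => ∑ m ∈ range (n+1), (n.choose m : ℝ) * iteratedDeriv m u y
          * iteratedDeriv (n-m) f y)
        (∑ m ∈ range (n+1), ((n.choose m : ℝ) * iteratedDeriv (m+1) u x
            * iteratedDeriv (n-m) f x
          + (n.choose m : ℝ) * iteratedDeriv m u x * iteratedDeriv (n-m+1) f x)) x := by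
      apply HasDerivAt.fun_sum
      intro m _
      have h1 := (hasDerivAt_itd (m := m) hu x).const_mul ((n.choose m : ℝ))
      have h2 := hasDerivAt_itd (m := n - m) hf x
      exact (h1.mul h2).congr_deriv (by ring)
    rw [iteratedDeriv_succ, hfun, hD.deriv]
    have hsum : ∀ m ∈ range (n+1),
        ((n.choose m : ℝ) * iteratedDeriv (m+1) u x * iteratedDeriv (n-m) f x
          + (n.choose m : ℝ) * iteratedDeriv m u x * iteratedDeriv (n-m+1) f x)
        = (n.choose m : ℝ) * (iteratedDeriv (m+1) u x * iteratedDeriv (n+1-(m+1)) f x)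
          + (n.choose m : ℝ) * (iteratedDeriv m u x * iteratedDeriv (n+1-m) f x) := by
      intro m hm
      rw [Finset.mem_range] at hm
      have e1 : n + 1 - (m + 1) = n - m := by omega
      have e2 : n - m + 1 = n + 1 - m := by omega
      rw [e1, e2]; ring
    rw [Finset.sum_congr rfl hsum, Finset.sum_add_distrib]
    have hp := pascal_sum n (fun m => iteratedDeriv m u x * iteratedDeriv (n+1-m) f x)
    simp only [mul_assoc]
    exact hp.symm

private noncomputable def cf (r : ℕ) (u f : ℝ → ℝ) : ℕ → ℕ → (ℝ → ℝ)
  | 0, 0 => f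
  | 0, _+1 => fun _ => 0
  | k+1, 0 => iteratedDeriv r (cf r u f k 0)
  | k+1, j+1 => fun x => iteratedDeriv r (cf r u f k (j+1)) x + u x * cf r u f k j x

private lemma cf_smooth (r : ℕ) {u f : ℝ → ℝ} (hu : ContDiff ℝ ∞ u) (hf : ContDiff ℝ ∞ f) :
    ∀ k j, ContDiff ℝ ∞ (cf r u f k j)
  | 0, 0 => hf
  | 0, _+1 => contDiff_const
  | k+1, 0 => itd_smooth (cf_smooth r hu hf k 0)
  | k+1, j+1 =>
      (itd_smooth (cf_smooth r hu hf k (j+1))).add (hu.mul (cf_smooth r hu hf k j))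

private lemma cf_zero_of_lt (r : ℕ) (u f : ℝ → ℝ) :
    ∀ k j, k < j → cf r u f k j = fun _ => 0
  | 0, _+1, _ => rfl
  | k+1, j+1, h => by
      have h1 : cf r u f k (j+1) = fun _ => 0 := cf_zero_of_lt r u f k (j+1) (by omega)
      have h2 : cf r u f k j = fun _ => 0 := cf_zero_of_lt r u f k j (by omega)
      funext x
      simp [cf, h1, h2, itd_zero]

private lemma expand (r : ℕ) {u f : ℝ → ℝ} (hu : ContDiff ℝ ∞ u) (hf : ContDiff ℝ ∞ f)
    (k : ℕ) (ε : ℝ) (x : ℝ) :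
    ((fun g => iteratedDeriv r g + ε • (u * g))^[k] f) x
      = ∑ j ∈ Finset.range (k+1), ε^j * cf r u f k j x := by
  induction k generalizing x with
  | zero => simp [cf]
  | succ k ih =>
    rw [Function.iterate_succ_apply']
    have hg : (fun g => iteratedDeriv r g + ε • (u * g))^[k] f
        = fun y => ∑ j ∈ range (k+1), ε^j * cf r u f k j y := funext ih
    rw [hg]
    simp only [Pi.add_apply, Pi.smul_apply, Pi.mul_apply, smul_eq_mul]
    rw [itd_sum (range (k+1)) (fun j => fun y => ε^j * cf r u f k j y)
      (fun j _ => (contDiff_const (c := ε^j)).mul (cf_smooth r hu hf k j)) x]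
    have hc : ∀ j ∈ range (k+1),
        iteratedDeriv r (fun y => ε^j * cf r u f k j y) x
          = ε^j * iteratedDeriv r (cf r u f k j) x :=
      fun j _ => itd_const_mul (ε^j) (cf_smooth r hu hf k j) x
    rw [Finset.sum_congr rfl hc]
    -- RHS: split off j = 0
    rw [Finset.sum_range_succ' (fun j => ε^j * cf r u f (k+1) j x) (k+1)]
    -- LHS first sum: split off j = 0
    rw [Finset.sum_range_succ' (fun j => ε^j * iteratedDeriv r (cf r u f k j) x) k]
    rw [Finset.mul_sum]
    simp only [pow_zero, one_mul, pow_succ]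
    have hz : ε^k * ε * iteratedDeriv r (cf r u f k (k+1)) x = 0 := by
      rw [cf_zero_of_lt r u f k (k+1) (by omega)]
      simp [itd_zero]
    have hcf1 : ∀ j, cf r u f (k+1) (j+1) x
        = iteratedDeriv r (cf r u f k (j+1)) x + u x * cf r u f k j x := fun j => rfl
    have hcf0 : cf r u f (k+1) 0 x = iteratedDeriv r (cf r u f k 0) x := rfl
    simp only [hcf1, hcf0, mul_add, Finset.sum_add_distrib]
    rw [Finset.sum_range_succ (fun j => ε^j * ε * iteratedDeriv r (cf r u f k (j+1)) x) k,
      hz, add_zero]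
    have hmul : ε * ∑ i ∈ range (k+1), u x * (ε^i * cf r u f k i x)
        = ∑ i ∈ range (k+1), ε^i * ε * (u x * cf r u f k i x) := by
      rw [Finset.mul_sum]; exact Finset.sum_congr rfl fun i _ => by ring
    rw [hmul]
    ring

private lemma cf_zero (r : ℕ) (u f : ℝ → ℝ) (k : ℕ) :
    cf r u f k 0 = iteratedDeriv (r * k) f := by
  induction k with
  | zero => simp [cf]
  | succ k ih =>
      show iteratedDeriv r (cf r u f k 0) = _
      rw [ih, itd_comp, show r + r * k = r * (k+1) by ring]

private lemma cf_one (r : ℕ) {u f : ℝ → ℝ} (hu : ContDiff ℝ ∞ u) (hf : ContDiff ℝ ∞ f) (k : ℕ) :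
    cf r u f k 1 = fun x => ∑ i ∈ range k,
      iteratedDeriv (r * i) (fun y => u y * iteratedDeriv (r * (k - 1 - i)) f y) x := by
  induction k with
  | zero => funext x; simp [cf]
  | succ k ih =>
      funext x
      show iteratedDeriv r (cf r u f k 1) x + u x * cf r u f k 0 x = _
      rw [ih, cf_zero]
      rw [itd_sum (range k)
        (fun i => fun y => iteratedDeriv (r * i) (fun z => u z * iteratedDeriv (r * (k-1-i)) f z) y)
        (fun i _ => itd_smooth (hu.mul (itd_smooth hf))) x]
      rw [Finset.sum_range_succ' (fun i =>
        iteratedDeriv (r * i) (fun y => u y * iteratedDeriv (r * (k + 1 - 1 - i)) f y) x) k]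
      simp only [Nat.add_sub_cancel, Nat.mul_zero, iteratedDeriv_zero, Nat.sub_zero]
      congr 1
      refine Finset.sum_congr rfl fun i _ => ?_
      rw [itd_comp, show r + r * i = r * (i+1) by ring,
        show k - (i+1) = k - 1 - i by omega]

/-- For `L_r f = f^{(r)} + u·f`, the terms of `L_r^k f` of degree ≤ 1 in `u`
are `f^{(rk)} + Σ_{m₀+m₁=r(k-1)} (Σ_{i=0}^{k-1} C(ri,m₁)) u^{(m₁)} f^{(m₀)}`.
This is encoded by scaling `u ↦ ε·u`: the value at `ε = 0` is `f^{(rk)}` and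
the `ε`-derivative at `0` is the degree-one part. -/
theorem stmt15 (r k : ℕ) (hr : 1 ≤ r) (hk : 1 ≤ k)
    (u f : ℝ → ℝ) (hu : ContDiff ℝ (⊤ : ℕ∞) u) (hf : ContDiff ℝ (⊤ : ℕ∞) f) :
    let Lε : ℝ → (ℝ → ℝ) → (ℝ → ℝ) := fun ε g => iteratedDeriv r g + ε • (u * g)
    (∀ x : ℝ, ((Lε 0)^[k] f) x = iteratedDeriv (r * k) f x) ∧
    (∀ x : ℝ, deriv (fun ε : ℝ => ((Lε ε)^[k] f) x) 0
      = ∑ m ∈ Finset.range (r * (k - 1) + 1),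
          (∑ i ∈ Finset.range k, (Nat.choose (r * i) m : ℝ))
            * iteratedDeriv m u x * iteratedDeriv (r * (k - 1) - m) f x) := by
  intro Lε
  have hu' : ContDiff ℝ ∞ u := hu.of_le (by simp)
  have hf' : ContDiff ℝ ∞ f := hf.of_le (by simp)
  constructor
  · intro x
    rw [show ((Lε 0)^[k] f) x = ∑ j ∈ Finset.range (k+1), (0:ℝ)^j * cf r u f k j x from
      expand r hu' hf' k 0 x]
    rw [Finset.sum_eq_single_of_mem 0 (Finset.mem_range.mpr (by omega))
      (fun b _ hb => by simp [zero_pow hb])]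
    simp [cf_zero]
  · intro x
    have hfun : (fun ε : ℝ => ((Lε ε)^[k] f) x)
        = fun ε => ∑ j ∈ range (k+1), ε^j * cf r u f k j x :=
      funext fun ε => expand r hu' hf' k ε x
    rw [hfun]
    have hD : HasDerivAt (fun ε : ℝ => ∑ j ∈ range (k+1), ε^j * cf r u f k j x)
        (∑ j ∈ range (k+1), ((j:ℝ) * (0:ℝ)^(j-1)) * cf r u f k j x) 0 :=
      HasDerivAt.fun_sum fun j _ => (hasDerivAt_pow j 0).mul_const _
    rw [hD.deriv]
    have h1 : ∑ j ∈ range (k+1), ((j:ℝ) * (0:ℝ)^(j-1)) * cf r u f k j x = cf r u f k 1 x := by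
      rw [Finset.sum_eq_single_of_mem 1 (Finset.mem_range.mpr (by omega)) ?_]
      · norm_num
      · intro b _ hb
        match b with
        | 0 => norm_num
        | (n+2) => simp [zero_pow]
    rw [h1, cf_one r hu' hf' k]
    beta_reduce
    have hL : ∀ i ∈ range k,
        iteratedDeriv (r*i) (fun y => u y * iteratedDeriv (r*(k-1-i)) f y) x
        = ∑ m ∈ range (r*(k-1)+1), ((r*i).choose m : ℝ) * iteratedDeriv m u x
            * iteratedDeriv (r*(k-1) - m) f x := by
      intro i hi
      rw [Finset.mem_range] at hi
      rw [itd_leibniz (r*i) hu' (itd_smooth hf') x]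
      have hle : r*i ≤ r*(k-1) := Nat.mul_le_mul_left r (by omega)
      have hsub : r*(k-1-i) + r*i = r*(k-1) := by
        rw [← Nat.mul_add, Nat.sub_add_cancel (by omega : i ≤ k-1)]
      have hterm : ∀ m ∈ range (r*i+1),
          ((r*i).choose m : ℝ) * iteratedDeriv m u x
            * iteratedDeriv (r*i - m) (iteratedDeriv (r*(k-1-i)) f) x
          = ((r*i).choose m : ℝ) * iteratedDeriv m u x * iteratedDeriv (r*(k-1)-m) f x := by
        intro m hm; rw [Finset.mem_range] at hm
        rw [itd_comp, show r*i - m + r*(k-1-i) = r*(k-1) - m by omega]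
      rw [Finset.sum_congr rfl hterm]
      refine Finset.sum_subset (Finset.range_subset_range.mpr (by omega)) ?_
      intro m _ hm
      rw [Finset.mem_range, not_lt] at hm
      rw [Nat.choose_eq_zero_of_lt (by omega)]
      simp
    rw [Finset.sum_congr rfl hL, Finset.sum_comm]
    refine Finset.sum_congr rfl fun m _ => ?_
    rw [← Finset.sum_mul, ← Finset.sum_mul]
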